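/- arXiv:2101.12733 — 2 statements merged into one kernel-verified Lean document; each statement's English description precedes it below -/
import Mathlib

section
/- Let 𝓕 be a non-empty class of finite simple graphs closed under isomorphism, and let Ext(𝓕) be the class of graphs E for which there exist graphs F₁, F₂ ∈ 𝓕 such that there is a surjective homomorphism from F₁ onto E and an injective homomorphism from E into F₂. If G and H are graphs belonging to 𝓕 and for every graph D ∈ Ext(𝓕) the number of homomorphisms from G to D equals the number of homomorphisms from H to D, then G is isomorphic to H. -/
open SimpleGraph

/-- A homomorphism `h : F →g G` is surjective onto `G` if its image includes every vertex and
every edge of `G`. -/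
def IsSurjectiveHom {α β : Type*} (F : SimpleGraph α) (G : SimpleGraph β) (h : F →g G) : Prop :=
  Function.Surjective h ∧ ∀ u v : β, G.Adj u v → ∃ a b : α, F.Adj a b ∧ h a = u ∧ h b = v

/-- Membership of a graph `D` in the extension class `Ext(𝓕)` of a class `𝓕` of finite simple
graphs: there are members `F₁, F₂` of `𝓕` with a surjective homomorphism from `F₁` onto `D` and
an injective homomorphism from `D` into `F₂`. -/
def MemExt (𝓕 : ∀ n : ℕ, Set (SimpleGraph (Fin n))) {k : ℕ} (D : SimpleGraph (Fin k)) : Prop :=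
  (∃ (m : ℕ) (F₁ : SimpleGraph (Fin m)), F₁ ∈ 𝓕 m ∧ ∃ h : F₁ →g D, IsSurjectiveHom F₁ D h) ∧
  (∃ (m : ℕ) (F₂ : SimpleGraph (Fin m)), F₂ ∈ 𝓕 m ∧ ∃ h : D →g F₂, Function.Injective h)

namespace LovaszAux

instance homFinite {α β : Type*} [Finite α] [Finite β] {A : SimpleGraph α} {B : SimpleGraph β} :
    Finite (A →g B) :=
  Finite.of_injective (fun f => (f : α → β)) DFunLike.coe_injective

/-- Number of surjective ("full") homomorphisms. -/
noncomputable def fullcount {p j : ℕ} (A : SimpleGraph (Fin p)) (D : SimpleGraph (Fin j)) : ℕ :=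
  Nat.card {f : A →g D // IsSurjectiveHom A D f}

/-- Number of edges. -/
noncomputable def ecount {j : ℕ} (D : SimpleGraph (Fin j)) : ℕ := Nat.card D.edgeSet

/-- Homomorphisms from `A` whose image data is `(S, E)` inside `D`. -/
abbrev Fiber {p k : ℕ} (A : SimpleGraph (Fin p)) (D : SimpleGraph (Fin k))
    (S : Finset (Fin k)) (E : SimpleGraph (Fin k)) : Type :=
  {f : A →g E // Set.range f = ↑S ∧ E ≤ D ∧
    ∀ u v, E.Adj u v → ∃ a b, A.Adj a b ∧ f a = u ∧ f b = v}

lemma nat_card_sigma {ι : Type*} [Fintype ι] {κ : ι → Type*} [∀ i, Finite (κ i)] :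
    Nat.card (Σ i, κ i) = ∑ i, Nat.card (κ i) := by
  letI : ∀ i, Fintype (κ i) := fun i => Fintype.ofFinite _
  simp [Nat.card_eq_fintype_card]

variable {p k : ℕ}

/-- The image graph of a homomorphism. -/
def imageGraph {A : SimpleGraph (Fin p)} {D : SimpleGraph (Fin k)} (f : A →g D) :
    SimpleGraph (Fin k) where
  Adj u v := ∃ a b, A.Adj a b ∧ f a = u ∧ f b = v
  symm := ⟨by rintro u v ⟨a, b, h, rfl, rfl⟩; exact ⟨b, a, h.symm, rfl, rfl⟩⟩
  loopless := ⟨by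
    rintro u ⟨a, b, h, rfl, hba⟩
    have := f.map_adj h
    rw [hba] at this
    exact D.irrefl this⟩

lemma fiber_sigma_ext {A : SimpleGraph (Fin p)} {D : SimpleGraph (Fin k)}
    {x y : Σ SE : Finset (Fin k) × SimpleGraph (Fin k), Fiber A D SE.1 SE.2}
    (h1 : x.1 = y.1) (h2 : ∀ v, (x.2.val : Fin p → Fin k) v = (y.2.val : Fin p → Fin k) v) :
    x = y := by
  obtain ⟨SE, f⟩ := x
  obtain ⟨SE', g⟩ := y
  dsimp at h1
  subst h1
  exact congrArg (Sigma.mk SE) (Subtype.ext (DFunLike.ext _ _ h2))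

/-- Decomposition of homomorphisms by image data. -/
noncomputable def decompEquiv (A : SimpleGraph (Fin p)) (D : SimpleGraph (Fin k)) :
    (A →g D) ≃ Σ SE : Finset (Fin k) × SimpleGraph (Fin k), Fiber A D SE.1 SE.2 where
  toFun f := ⟨(Finset.univ.image f, imageGraph f),
    ⟨⟨f, fun {a b} h => ⟨a, b, h, rfl, rfl⟩⟩, by
      refine ⟨?_, ?_, fun u v h => h⟩
      · show Set.range (f : Fin p → Fin k) = _
        rw [Finset.coe_image, Finset.coe_univ, Set.image_univ]
      · rintro u v ⟨a, b, h, rfl, rfl⟩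
        exact f.map_adj h⟩⟩
  invFun t := (SimpleGraph.Hom.ofLE t.2.prop.2.1).comp t.2.val
  left_inv f := DFunLike.ext _ _ fun v => rfl
  right_inv := by
    rintro ⟨⟨S, E⟩, f, hrange, hle, hfull⟩
    apply fiber_sigma_ext
    · dsimp
      have h1 : Finset.univ.image
          ((SimpleGraph.Hom.ofLE hle).comp f : Fin p → Fin k) = S := by
        apply Finset.coe_injective
        rw [Finset.coe_image, Finset.coe_univ, Set.image_univ]
        exact hrange
      have h2 : imageGraph ((SimpleGraph.Hom.ofLE hle).comp f) = E := by
        ext u v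
        constructor
        · rintro ⟨a, b, h, rfl, rfl⟩
          exact f.map_adj h
        · intro h
          exact hfull u v h
      exact Prod.ext h1 h2
    · intro v; rfl

lemma card_hom_eq_sum_fiber (A : SimpleGraph (Fin p)) (D : SimpleGraph (Fin k)) :
    Nat.card (A →g D)
      = ∑ SE : Finset (Fin k) × SimpleGraph (Fin k), Nat.card (Fiber A D SE.1 SE.2) := by
  rw [Nat.card_congr (decompEquiv A D), nat_card_sigma]

lemma card_fiber_univ (A : SimpleGraph (Fin p)) (D E : SimpleGraph (Fin k)) (hle : E ≤ D) :
    Nat.card (Fiber A D Finset.univ E) = fullcount A E := by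
  apply Nat.card_congr
  apply Equiv.subtypeEquivRight
  intro f
  constructor
  · rintro ⟨h1, -, h3⟩
    refine ⟨fun y => ?_, h3⟩
    have : y ∈ Set.range (f : Fin p → Fin k) := by rw [h1]; simp
    exact this
  · rintro ⟨h1, h2⟩
    exact ⟨by rw [Set.range_eq_univ.mpr h1, Finset.coe_univ], hle, h2⟩

/-- Relabelling of a graph supported on `S` as a graph on `Fin S.card`. -/
def pull (S : Finset (Fin k)) (E : SimpleGraph (Fin k)) : SimpleGraph (Fin S.card) :=
  SimpleGraph.comap (S.orderEmbOfFin rfl : Fin S.card → Fin k) E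

lemma edge_map_le {α β : Type*} (f : α → β) (P : SimpleGraph α) (Q : SimpleGraph β)
    (hf : ∀ ⦃a b⦄, P.Adj a b → Q.Adj (f a) (f b)) :
    ∀ e ∈ P.edgeSet, Sym2.map f e ∈ Q.edgeSet := by
  intro e
  induction e with
  | _ a b =>
    intro he
    rw [SimpleGraph.mem_edgeSet] at he
    rw [Sym2.map_pair_eq, SimpleGraph.mem_edgeSet]
    exact hf he

lemma ecount_le_of_inj {j j' : ℕ} {P : SimpleGraph (Fin j)} {Q : SimpleGraph (Fin j')}
    (f : Fin j → Fin j') (hinj : Function.Injective f)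
    (hf : ∀ ⦃a b⦄, P.Adj a b → Q.Adj (f a) (f b)) : ecount P ≤ ecount Q := by
  apply Nat.card_le_card_of_injective
    (fun x => (⟨Sym2.map f x.val, edge_map_le f P Q hf x.val x.prop⟩ : Q.edgeSet))
  intro x y h
  exact Subtype.ext (Sym2.map.injective hinj (congrArg Subtype.val h))

lemma ecount_lt_of_lt {j : ℕ} {E D : SimpleGraph (Fin j)} (h : E < D) : ecount E < ecount D := by
  have hss : E.edgeSet ⊂ D.edgeSet := SimpleGraph.edgeSet_ssubset_edgeSet.mpr h
  have := Set.ncard_lt_ncard hss (Set.toFinite _)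
  simpa [ecount, Nat.card_coe_set_eq] using this

lemma ecount_le_of_le {j : ℕ} {E D : SimpleGraph (Fin j)} (h : E ≤ D) : ecount E ≤ ecount D :=
  ecount_le_of_inj id Function.injective_id fun _ _ hab => h hab

noncomputable def invS (S : Finset (Fin k)) (x : Fin k) (hx : x ∈ S) : Fin S.card :=
  Classical.choose (show ∃ i, (S.orderEmbOfFin rfl) i = x from by
    have hx' : x ∈ Set.range (S.orderEmbOfFin rfl) := by
      rw [S.range_orderEmbOfFin rfl]; exact hx
    exact hx')

lemma invS_spec (S : Finset (Fin k)) (x : Fin k) (hx : x ∈ S) :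
    (S.orderEmbOfFin rfl) (invS S x hx) = x := by
  have h : ∃ i, (S.orderEmbOfFin rfl) i = x := by
    have hx' : x ∈ Set.range (S.orderEmbOfFin rfl) := by
      rw [S.range_orderEmbOfFin rfl]; exact hx
    exact hx'
  show (S.orderEmbOfFin rfl) (Classical.choose h) = x
  exact Classical.choose_spec h

lemma invS_apply (S : Finset (Fin k)) (i : Fin S.card) (h : (S.orderEmbOfFin rfl) i ∈ S) :
    invS S ((S.orderEmbOfFin rfl) i) h = i :=
  (S.orderEmbOfFin rfl).injective (invS_spec S _ h)

lemma mem_of_fiber_range {p : ℕ} {A : SimpleGraph (Fin p)} {E : SimpleGraph (Fin k)}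
    {S : Finset (Fin k)} (f : A →g E) (hrange : Set.range (f : Fin p → Fin k) = ↑S)
    (v : Fin p) : f v ∈ S := by
  have : (f : Fin p → Fin k) v ∈ Set.range (f : Fin p → Fin k) := Set.mem_range_self v
  rw [hrange] at this
  exact this

/-- Fibers over a vertex set `S` are in bijection with full homomorphisms to the
relabelled graph. -/
noncomputable def relabelEquiv (A : SimpleGraph (Fin p)) (D : SimpleGraph (Fin k))
    (S : Finset (Fin k)) (E : SimpleGraph (Fin k)) (hle : E ≤ D)
    (hsupp : ∀ ⦃u v⦄, E.Adj u v → u ∈ S) :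
    Fiber A D S E ≃ {g : A →g pull S E // IsSurjectiveHom A (pull S E) g} where
  toFun f := ⟨⟨fun v => invS S (f.val v) (mem_of_fiber_range f.val f.prop.1 v), by
      intro a b h
      show E.Adj ((S.orderEmbOfFin rfl) (invS S _ _)) ((S.orderEmbOfFin rfl) (invS S _ _))
      rw [invS_spec, invS_spec]
      exact f.val.map_adj h⟩, by
      constructor
      · intro i
        have : (S.orderEmbOfFin rfl) i ∈ Set.range (f.val : Fin p → Fin k) := by
          rw [f.prop.1, ← S.range_orderEmbOfFin rfl]
          exact Set.mem_range_self i
        obtain ⟨v, hv⟩ := this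
        refine ⟨v, ?_⟩
        show invS S (f.val v) (mem_of_fiber_range f.val f.prop.1 v) = i
        apply (S.orderEmbOfFin rfl).injective
        rw [invS_spec, hv]
      · intro u v h
        obtain ⟨a, b, hab, ha, hb⟩ :=
          f.prop.2.2 ((S.orderEmbOfFin rfl) u) ((S.orderEmbOfFin rfl) v) h
        refine ⟨a, b, hab, ?_, ?_⟩
        · apply (S.orderEmbOfFin rfl).injective
          show (S.orderEmbOfFin rfl)
            (invS S (f.val a) (mem_of_fiber_range f.val f.prop.1 a)) = _
          rw [invS_spec, ha]
        · apply (S.orderEmbOfFin rfl).injective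
          show (S.orderEmbOfFin rfl)
            (invS S (f.val b) (mem_of_fiber_range f.val f.prop.1 b)) = _
          rw [invS_spec, hb]⟩
  invFun g := ⟨⟨fun v => (S.orderEmbOfFin rfl) (g.val v), fun {a b} h => g.val.map_adj h⟩, by
      refine ⟨?_, hle, ?_⟩
      · show Set.range (fun v => (S.orderEmbOfFin rfl) (g.val v)) = (S : Set (Fin k))
        have h1 : Set.range (fun v => (S.orderEmbOfFin rfl) (g.val v))
            = (S.orderEmbOfFin rfl) '' Set.range (g.val : _ → _) :=
          Set.range_comp _ _
        rw [h1, Set.range_eq_univ.mpr g.prop.1, Set.image_univ, S.range_orderEmbOfFin rfl]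
      · intro u v h
        have hu : u ∈ S := hsupp h
        have hv : v ∈ S := hsupp h.symm
        have hadj : (pull S E).Adj (invS S u hu) (invS S v hv) := by
          show E.Adj ((S.orderEmbOfFin rfl) _) ((S.orderEmbOfFin rfl) _)
          rw [invS_spec, invS_spec]
          exact h
        obtain ⟨a, b, hab, ha, hb⟩ := g.prop.2 (invS S u hu) (invS S v hv) hadj
        refine ⟨a, b, hab, ?_, ?_⟩
        · show (S.orderEmbOfFin rfl) (g.val a) = u
          rw [ha, invS_spec]
        · show (S.orderEmbOfFin rfl) (g.val b) = v
          rw [hb, invS_spec]⟩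
  left_inv := by
    rintro ⟨f, hf⟩
    apply Subtype.ext
    apply DFunLike.ext
    intro v
    exact invS_spec S (f v) (mem_of_fiber_range f hf.1 v)
  right_inv := by
    rintro ⟨g, hg⟩
    apply Subtype.ext
    apply DFunLike.ext
    intro v
    exact invS_apply S (g v) (by
      have : (S.orderEmbOfFin rfl) (g v) ∈ Set.range (S.orderEmbOfFin rfl) :=
        Set.mem_range_self _
      rw [S.range_orderEmbOfFin rfl] at this
      exact this)


lemma key (𝓕 : ∀ n : ℕ, Set (SimpleGraph (Fin n)))
    {p q : ℕ} (G : SimpleGraph (Fin p)) (H : SimpleGraph (Fin q))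
    (hG : G ∈ 𝓕 p) (hH : H ∈ 𝓕 q)
    (hhom : ∀ (k : ℕ) (D : SimpleGraph (Fin k)), MemExt 𝓕 D →
      Nat.card (G →g D) = Nat.card (H →g D)) :
    ∀ (n j : ℕ) (D : SimpleGraph (Fin j)), j + ecount D = n → MemExt 𝓕 D →
      fullcount G D = fullcount H D := by
  classical
  intro n
  induction n using Nat.strong_induction_on with
  | _ n IH =>
    intro j D hn hD
    have hsum := hhom j D hD
    rw [card_hom_eq_sum_fiber G D, card_hom_eq_sum_fiber H D,
      ← Finset.add_sum_erase _ _ (Finset.mem_univ ((Finset.univ, D) :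
        Finset (Fin j) × SimpleGraph (Fin j))),
      ← Finset.add_sum_erase _ _ (Finset.mem_univ ((Finset.univ, D) :
        Finset (Fin j) × SimpleGraph (Fin j)))] at hsum
    have hrest : ∀ t ∈ (Finset.univ : Finset (Finset (Fin j) × SimpleGraph (Fin j))).erase
        (Finset.univ, D),
        Nat.card (Fiber G D t.1 t.2) = Nat.card (Fiber H D t.1 t.2) := by
      rintro ⟨S, E⟩ ht
      have hne : (S, E) ≠ ((Finset.univ, D) : Finset (Fin j) × SimpleGraph (Fin j)) :=
        Finset.ne_of_mem_erase ht
      by_cases hw : Nonempty (Fiber G D S E) ∨ Nonempty (Fiber H D S E)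
      case neg =>
        rw [not_or] at hw
        have e1 : IsEmpty (Fiber G D S E) := not_nonempty_iff.mp hw.1
        have e2 : IsEmpty (Fiber H D S E) := not_nonempty_iff.mp hw.2
        rw [Nat.card_of_isEmpty, Nat.card_of_isEmpty]
      case pos =>
      have hdata : ∃ (m : ℕ) (A : SimpleGraph (Fin m)), A ∈ 𝓕 m ∧
          Nonempty (Fiber A D S E) := by
        rcases hw with hw | hw
        · exact ⟨p, G, hG, hw⟩
        · exact ⟨q, H, hH, hw⟩
      obtain ⟨m, A, hA, ⟨f, hrange, hle, hfull⟩⟩ := hdata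
      have hsupp : ∀ ⦃u v⦄, E.Adj u v → u ∈ S := by
        intro u v h
        obtain ⟨a, b, hab, ha, hb⟩ := hfull u v h
        exact ha ▸ mem_of_fiber_range f hrange a
      by_cases hS : S = Finset.univ
      · subst hS
        have hED : E ≠ D := by
          intro hED
          exact hne (by rw [hED])
        have hlt : E < D := lt_of_le_of_ne hle hED
        rw [card_fiber_univ G D E hle, card_fiber_univ H D E hle]
        have hfE : IsSurjectiveHom A E f := by
          refine ⟨Set.range_eq_univ.mp ?_, hfull⟩
          rw [hrange]; simp
        have hEExt : MemExt 𝓕 E := by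
          constructor
          · exact ⟨m, A, hA, f, hfE⟩
          · obtain ⟨m₂, F₂, hF₂, ι, hι⟩ := hD.2
            refine ⟨m₂, F₂, hF₂, ι.comp (SimpleGraph.Hom.ofLE hle), ?_⟩
            intro a b hab
            exact hι hab
        exact IH (j + ecount E) (by have := ecount_lt_of_lt hlt; omega) j E rfl hEExt
      · have hcard : S.card < j := by
          have h1 : S ⊂ Finset.univ := Finset.ssubset_univ_iff.mpr hS
          have h2 := Finset.card_lt_card h1
          simpa using h2
        rw [Nat.card_congr (relabelEquiv G D S E hle hsupp),
            Nat.card_congr (relabelEquiv H D S E hle hsupp)]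
        have hpExt : MemExt 𝓕 (pull S E) := by
          constructor
          · exact ⟨m, A, hA, ((relabelEquiv A D S E hle hsupp) ⟨f, hrange, hle, hfull⟩).val,
              ((relabelEquiv A D S E hle hsupp) ⟨f, hrange, hle, hfull⟩).prop⟩
          · obtain ⟨m₂, F₂, hF₂, ι, hι⟩ := hD.2
            refine ⟨m₂, F₂, hF₂, ⟨fun v => ι ((S.orderEmbOfFin rfl) v), ?_⟩, ?_⟩
            · intro a b hab
              exact ι.map_adj (hle hab)
            · intro a b hab
              exact (S.orderEmbOfFin rfl).injective (hι hab)
        have hmeas : S.card + ecount (pull S E) < n := by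
          have h1 : ecount (pull S E) ≤ ecount E :=
            ecount_le_of_inj (S.orderEmbOfFin rfl) (S.orderEmbOfFin rfl).injective
              (fun a b hab => hab)
          have h2 : ecount E ≤ ecount D := ecount_le_of_le hle
          omega
        exact IH (S.card + ecount (pull S E)) hmeas _ (pull S E) rfl hpExt
    rw [Finset.sum_congr rfl hrest] at hsum
    have htop := Nat.add_right_cancel hsum
    rwa [card_fiber_univ G D D le_rfl, card_fiber_univ H D D le_rfl] at htop

end LovaszAux

open LovaszAux in
/-- For graphs `G, H` in a non-empty isomorphism-closed class `𝓕`, equality of the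
right-homomorphism counts into every graph of `Ext(𝓕)` implies that `G` and `H` are isomorphic. -/
theorem right_hom_counts_ext_determine_iso
    (𝓕 : ∀ n : ℕ, Set (SimpleGraph (Fin n)))
    (hne : ∃ (n : ℕ) (G : SimpleGraph (Fin n)), G ∈ 𝓕 n)
    (hiso : ∀ (m n : ℕ) (G : SimpleGraph (Fin m)) (H : SimpleGraph (Fin n)),
      G ∈ 𝓕 m → Nonempty (G ≃g H) → H ∈ 𝓕 n)
    {p q : ℕ} (G : SimpleGraph (Fin p)) (H : SimpleGraph (Fin q))
    (hG : G ∈ 𝓕 p) (hH : H ∈ 𝓕 q)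
    (hhom : ∀ (k : ℕ) (D : SimpleGraph (Fin k)), MemExt 𝓕 D →
      Nat.card (G →g D) = Nat.card (H →g D)) :
    Nonempty (G ≃g H) := by
  classical
  have hHExt : MemExt 𝓕 H :=
    ⟨⟨q, H, hH, SimpleGraph.Hom.id, Function.surjective_id,
        fun u v h => ⟨u, v, h, rfl, rfl⟩⟩,
      ⟨q, H, hH, SimpleGraph.Hom.id, fun a b h => h⟩⟩
  have hGExt : MemExt 𝓕 G :=
    ⟨⟨p, G, hG, SimpleGraph.Hom.id, Function.surjective_id,
        fun u v h => ⟨u, v, h, rfl, rfl⟩⟩,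
      ⟨p, G, hG, SimpleGraph.Hom.id, fun a b h => h⟩⟩
  have k1 : fullcount G H = fullcount H H := key 𝓕 G H hG hH hhom _ q H rfl hHExt
  have k2 : fullcount H G = fullcount G G :=
    key 𝓕 H G hH hG (fun k D hD => (hhom k D hD).symm) _ p G rfl hGExt
  have pos1 : 0 < fullcount H H := by
    have : Nonempty {f : H →g H // IsSurjectiveHom H H f} :=
      ⟨⟨SimpleGraph.Hom.id, Function.surjective_id, fun u v h => ⟨u, v, h, rfl, rfl⟩⟩⟩
    exact Nat.card_pos
  have pos2 : 0 < fullcount G G := by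
    have : Nonempty {f : G →g G // IsSurjectiveHom G G f} :=
      ⟨⟨SimpleGraph.Hom.id, Function.surjective_id, fun u v h => ⟨u, v, h, rfl, rfl⟩⟩⟩
    exact Nat.card_pos
  obtain ⟨⟨g, hg⟩⟩ := (Nat.card_pos_iff.mp (k1 ▸ pos1)).1
  obtain ⟨⟨f', hf'⟩⟩ := (Nat.card_pos_iff.mp (k2 ▸ pos2)).1
  have hqp : q ≤ p := by
    have := Nat.card_le_card_of_surjective (g : Fin p → Fin q) hg.1
    simpa using this
  have hpq : p ≤ q := by
    have := Nat.card_le_card_of_surjective (f' : Fin q → Fin p) hf'.1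
    simpa using this
  have hcards : Nat.card (Fin p) = Nat.card (Fin q) := by
    simp [le_antisymm hpq hqp]
  have hbij : Function.Bijective (g : Fin p → Fin q) :=
    (Nat.bijective_iff_surjective_and_card _).mpr ⟨hg.1, hcards⟩
  refine ⟨⟨Equiv.ofBijective _ hbij, ?_⟩⟩
  intro a b
  constructor
  · intro h
    obtain ⟨a', b', hab, ha, hb⟩ := hg.2 _ _ h
    have ha' : a' = a := hbij.1 ha
    have hb' : b' = b := hbij.1 hb
    rwa [ha', hb'] at hab
  · exact fun h => g.map_adj h
end

section
/- There is no class 𝓕 of finite simple graphs (closed under isomorphism) such that for every two graphs G and H: G and H are chromatically equivalent if and only if for every graph F ∈ 𝓕, the number of homomorphisms from F to G equals the number of homomorphisms from F to H. -/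
open SimpleGraph

/-- Two finite simple graphs are chromatically equivalent if for every `k ≥ 1` they have the same
number of `k`-colorings, i.e. the same number of homomorphisms into the complete graph `Kₖ`. -/
def ChromaticallyEquivalent {m n : ℕ} (G : SimpleGraph (Fin m)) (H : SimpleGraph (Fin n)) :
    Prop :=
  ∀ k : ℕ, 1 ≤ k →
    Nat.card (G →g (completeGraph (Fin k))) = Nat.card (H →g (completeGraph (Fin k)))

/-! ### Auxiliary definitions

The strategy: homomorphism-count indistinguishability over any class `𝓕` is preserved under
taking the tensor (categorical) product of the *target* graphs with a fixed graph, because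
`hom(F, G × K) = hom(F, G) · hom(F, K)`.  But chromatic equivalence is not: the path `P₄` and
the star `K₁,₃` are chromatically equivalent (both are trees on 4 vertices, with chromatic
polynomial `k(k-1)³`), while `P₄ × K₃` has 1038 proper 3-colorings and `K₁,₃ × K₃` has 1686. -/

/-- The path on 4 vertices. -/
def P4 : SimpleGraph (Fin 4) where
  Adj u v := u.val + 1 = v.val ∨ v.val + 1 = u.val
  symm := by constructor; intro u v h; tauto
  loopless := by constructor; intro u h; omega

/-- The star on 4 vertices with center `0`. -/
def S4 : SimpleGraph (Fin 4) where
  Adj u v := (u = 0 ∧ v ≠ 0) ∨ (v = 0 ∧ u ≠ 0)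
  symm := by constructor; intro u v h; tauto
  loopless := by constructor; intro u h; tauto

instance : DecidableRel P4.Adj := fun u v =>
  inferInstanceAs (Decidable (u.val + 1 = v.val ∨ v.val + 1 = u.val))

instance : DecidableRel S4.Adj := fun u v =>
  inferInstanceAs (Decidable ((u = 0 ∧ v ≠ 0) ∨ (v = 0 ∧ u ≠ 0)))

/-- Tensor (categorical) product of two graphs on `Fin` types. -/
def tensorG {m c : ℕ} (G : SimpleGraph (Fin m)) (K : SimpleGraph (Fin c)) :
    SimpleGraph (Fin (m * c)) where
  Adj x y := G.Adj (finProdFinEquiv.symm x).1 (finProdFinEquiv.symm y).1 ∧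
      K.Adj (finProdFinEquiv.symm x).2 (finProdFinEquiv.symm y).2
  symm := by constructor; intro x y h; exact ⟨h.1.symm, h.2.symm⟩
  loopless := by constructor; intro x h; exact G.loopless.irrefl _ h.1

@[simp] lemma relHom_mk_apply {α β : Type*} {r : α → α → Prop} {s : β → β → Prop}
    (f : α → β) (h : ∀ {a b}, r a b → s (f a) (f b)) (x : α) :
    (⟨f, @h⟩ : r →r s) x = f x := rfl

/-- `hom(F, G × K) ≃ hom(F, G) × hom(F, K)`. -/
def homTensorEquiv {k m c : ℕ} (F : SimpleGraph (Fin k)) (G : SimpleGraph (Fin m))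
    (K : SimpleGraph (Fin c)) : (F →g tensorG G K) ≃ (F →g G) × (F →g K) where
  toFun φ :=
    (⟨fun v => (finProdFinEquiv.symm (φ v)).1, fun h => (φ.map_rel' h).1⟩,
     ⟨fun v => (finProdFinEquiv.symm (φ v)).2, fun h => (φ.map_rel' h).2⟩)
  invFun p := ⟨fun v => finProdFinEquiv (p.1 v, p.2 v), by
    intro u v h
    constructor
    · simpa using p.1.map_rel' h
    · simpa using p.2.map_rel' h⟩
  left_inv φ := by
    ext v
    exact congrArg Fin.val (finProdFinEquiv.apply_symm_apply (φ v))
  right_inv p := by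
    ext v
    · exact congrArg (fun q => (Prod.fst q).val) (finProdFinEquiv.symm_apply_apply (p.1 v, p.2 v))
    · exact congrArg (fun q => (Prod.snd q).val) (finProdFinEquiv.symm_apply_apply (p.1 v, p.2 v))

lemma card_hom_tensor {k m c : ℕ} (F : SimpleGraph (Fin k)) (G : SimpleGraph (Fin m))
    (K : SimpleGraph (Fin c)) :
    Nat.card (F →g tensorG G K) = Nat.card (F →g G) * Nat.card (F →g K) := by
  rw [Nat.card_congr (homTensorEquiv F G K), Nat.card_prod]

/-! ### `P4` and `S4` are chromatically equivalent -/

def homP4Equiv (n : ℕ) :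
    (P4 →g completeGraph (Fin (n+1))) ≃
      {f : Fin 4 → Fin (n+1) // f 0 ≠ f 1 ∧ f 1 ≠ f 2 ∧ f 2 ≠ f 3} where
  toFun φ := ⟨φ, φ.map_rel' (by decide), φ.map_rel' (by decide), φ.map_rel' (by decide)⟩
  invFun f := ⟨f.1, by
    intro u v h
    obtain ⟨f, h1, h2, h3⟩ := f
    fin_cases u <;> fin_cases v <;>
      first
        | exact absurd h (by decide)
        | exact h1 | exact h2 | exact h3
        | exact h1.symm | exact h2.symm | exact h3.symm⟩
  left_inv φ := rfl
  right_inv f := rfl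

def homS4Equiv (n : ℕ) :
    (S4 →g completeGraph (Fin (n+1))) ≃
      {g : Fin 4 → Fin (n+1) // g 0 ≠ g 1 ∧ g 0 ≠ g 2 ∧ g 0 ≠ g 3} where
  toFun φ := ⟨φ, φ.map_rel' (by decide), φ.map_rel' (by decide), φ.map_rel' (by decide)⟩
  invFun f := ⟨f.1, by
    intro u v h
    obtain ⟨f, h1, h2, h3⟩ := f
    fin_cases u <;> fin_cases v <;>
      first
        | exact absurd h (by decide)
        | exact h1 | exact h2 | exact h3
        | exact h1.symm | exact h2.symm | exact h3.symm⟩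
  left_inv φ := rfl
  right_inv f := rfl

open Fin.CommRing in
def pathStarEquiv (n : ℕ) :
    {f : Fin 4 → Fin (n+1) // f 0 ≠ f 1 ∧ f 1 ≠ f 2 ∧ f 2 ≠ f 3} ≃
      {g : Fin 4 → Fin (n+1) // g 0 ≠ g 1 ∧ g 0 ≠ g 2 ∧ g 0 ≠ g 3} where
  toFun f := ⟨fun x => if x = 0 then f.1 0 else if x = 1 then f.1 1
      else if x = 2 then f.1 0 + f.1 2 - f.1 1 else f.1 0 + f.1 3 - f.1 2, by
    obtain ⟨f, h1, h2, h3⟩ := f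
    refine ⟨by simpa using h1, ?_, ?_⟩
    · simp only [reduceIte, show (2 : Fin 4) ≠ 0 by decide, show (2 : Fin 4) ≠ 1 by decide,
        if_neg, if_pos, if_true, if_false]
      intro h; exact h2 (by linear_combination h)
    · simp only [reduceIte, show (3 : Fin 4) ≠ 0 by decide, show (3 : Fin 4) ≠ 1 by decide,
        show (3 : Fin 4) ≠ 2 by decide, if_neg, if_pos, if_true, if_false]
      intro h; exact h3 (by linear_combination h)⟩
  invFun g := ⟨fun x => if x = 0 then g.1 0 else if x = 1 then g.1 1
      else if x = 2 then g.1 1 + g.1 2 - g.1 0 else g.1 1 + g.1 2 + g.1 3 - g.1 0 - g.1 0, by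
    obtain ⟨g, h1, h2, h3⟩ := g
    refine ⟨by simpa using h1, ?_, ?_⟩
    · simp only [reduceIte, show (1 : Fin 4) ≠ 0 by decide, show (2 : Fin 4) ≠ 0 by decide,
        show (2 : Fin 4) ≠ 1 by decide, if_neg, if_pos, if_true, if_false]
      intro h; exact h2 (by linear_combination h)
    · simp only [reduceIte, show (2 : Fin 4) ≠ 0 by decide, show (2 : Fin 4) ≠ 1 by decide,
        show (3 : Fin 4) ≠ 0 by decide, show (3 : Fin 4) ≠ 1 by decide,
        show (3 : Fin 4) ≠ 2 by decide, if_neg, if_pos, if_true, if_false]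
      intro h; exact h3 (by linear_combination h)⟩
  left_inv f := by
    apply Subtype.ext
    funext x
    fin_cases x <;> simp
  right_inv g := by
    apply Subtype.ext
    funext x
    fin_cases x <;> simp

lemma chromEquiv_P4_S4 : ChromaticallyEquivalent P4 S4 := by
  intro k hk
  obtain ⟨n, rfl⟩ : ∃ n, k = n + 1 := ⟨k - 1, by omega⟩
  exact Nat.card_congr ((homP4Equiv n).trans ((pathStarEquiv n).trans (homS4Equiv n).symm))

/-! ### Counting proper 3-colorings of the tensor products -/

abbrev Col := Fin 3 → Fin 3

/-- Compatibility of two consecutive "columns" of a coloring of `G ⊗ K₃`. -/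
def Rc (c c' : Col) : Prop := ∀ a b : Fin 3, a ≠ b → c a ≠ c' b

instance instDecidableRc (c c' : Col) : Decidable (Rc c c') :=
  inferInstanceAs (Decidable (∀ a b : Fin 3, a ≠ b → c a ≠ c' b))

lemma Rc.symm' {c c' : Col} (h : Rc c c') : Rc c' c := fun a b hab => (h b a hab.symm).symm

def colf (q : Col × Col × Col × Col) : Fin 4 → Col := fun i =>
  if i = 0 then q.1 else if i = 1 then q.2.1 else if i = 2 then q.2.2.1 else q.2.2.2

@[simp] lemma colf_zero (q : Col × Col × Col × Col) : colf q 0 = q.1 := rfl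
@[simp] lemma colf_one (q : Col × Col × Col × Col) : colf q 1 = q.2.1 := rfl
@[simp] lemma colf_two (q : Col × Col × Col × Col) : colf q 2 = q.2.2.1 := rfl
@[simp] lemma colf_three (q : Col × Col × Col × Col) : colf q 3 = q.2.2.2 := rfl

def homP4K3Equiv :
    ((tensorG P4 (completeGraph (Fin 3))) →g completeGraph (Fin 3)) ≃
      {q : Col × Col × Col × Col // Rc q.1 q.2.1 ∧ Rc q.2.1 q.2.2.1 ∧ Rc q.2.2.1 q.2.2.2} where
  toFun φ :=
    ⟨(fun a => φ (finProdFinEquiv (0, a)), fun a => φ (finProdFinEquiv (1, a)),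
      fun a => φ (finProdFinEquiv (2, a)), fun a => φ (finProdFinEquiv (3, a))),
     fun a b hab => φ.map_rel' (by
        refine ⟨?_, ?_⟩ <;> simp only [tensorG, Equiv.symm_apply_apply]
        · exact Or.inl rfl
        · simpa using hab),
     fun a b hab => φ.map_rel' (by
        refine ⟨?_, ?_⟩ <;> simp only [tensorG, Equiv.symm_apply_apply]
        · exact Or.inl rfl
        · simpa using hab),
     fun a b hab => φ.map_rel' (by
        refine ⟨?_, ?_⟩ <;> simp only [tensorG, Equiv.symm_apply_apply]
        · exact Or.inl rfl
        · simpa using hab)⟩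
  invFun q :=
    ⟨fun x => colf q.1 (finProdFinEquiv.symm x).1 (finProdFinEquiv.symm x).2, by
      obtain ⟨⟨q0, q1, q2, q3⟩, h01, h12, h23⟩ := q
      intro x y h
      obtain ⟨hP, hK⟩ := h
      simp only [completeGraph_eq_top, top_adj] at hK ⊢
      revert hP
      generalize (finProdFinEquiv.symm x).1 = i
      generalize (finProdFinEquiv.symm y).1 = j
      intro hP
      fin_cases i <;> fin_cases j <;>
        first
          | exact absurd hP (by decide)
          | (simp only [colf_zero, colf_one, colf_two, colf_three, Fin.isValue]
             first
               | exact h01 _ _ hK | exact h12 _ _ hK | exact h23 _ _ hK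
               | exact (h01.symm' _ _ hK) | exact (h12.symm' _ _ hK)
               | exact (h23.symm' _ _ hK))⟩
  left_inv φ := by
    ext x
    obtain ⟨p, rfl⟩ : ∃ p, finProdFinEquiv p = x := ⟨finProdFinEquiv.symm x, by simp⟩
    obtain ⟨i, a⟩ := p
    fin_cases i <;> simp [Equiv.symm_apply_apply]
  right_inv q := by
    apply Subtype.ext
    refine Prod.ext ?_ (Prod.ext ?_ (Prod.ext ?_ ?_)) <;>
      · funext a
        simp [Equiv.symm_apply_apply]

def homS4K3Equiv :
    ((tensorG S4 (completeGraph (Fin 3))) →g completeGraph (Fin 3)) ≃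
      {q : Col × Col × Col × Col // Rc q.1 q.2.1 ∧ Rc q.1 q.2.2.1 ∧ Rc q.1 q.2.2.2} where
  toFun φ :=
    ⟨(fun a => φ (finProdFinEquiv (0, a)), fun a => φ (finProdFinEquiv (1, a)),
      fun a => φ (finProdFinEquiv (2, a)), fun a => φ (finProdFinEquiv (3, a))),
     fun a b hab => φ.map_rel' (by
        refine ⟨?_, ?_⟩ <;> simp only [tensorG, Equiv.symm_apply_apply]
        · exact Or.inl ⟨rfl, by decide⟩
        · simpa using hab),
     fun a b hab => φ.map_rel' (by
        refine ⟨?_, ?_⟩ <;> simp only [tensorG, Equiv.symm_apply_apply]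
        · exact Or.inl ⟨rfl, by decide⟩
        · simpa using hab),
     fun a b hab => φ.map_rel' (by
        refine ⟨?_, ?_⟩ <;> simp only [tensorG, Equiv.symm_apply_apply]
        · exact Or.inl ⟨rfl, by decide⟩
        · simpa using hab)⟩
  invFun q :=
    ⟨fun x => colf q.1 (finProdFinEquiv.symm x).1 (finProdFinEquiv.symm x).2, by
      obtain ⟨⟨q0, q1, q2, q3⟩, h01, h02, h03⟩ := q
      intro x y h
      obtain ⟨hP, hK⟩ := h
      simp only [completeGraph_eq_top, top_adj] at hK ⊢
      revert hP
      generalize (finProdFinEquiv.symm x).1 = i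
      generalize (finProdFinEquiv.symm y).1 = j
      intro hP
      fin_cases i <;> fin_cases j <;>
        first
          | exact absurd hP (by decide)
          | (simp only [colf_zero, colf_one, colf_two, colf_three, Fin.isValue]
             first
               | exact h01 _ _ hK | exact h02 _ _ hK | exact h03 _ _ hK
               | exact (h01.symm' _ _ hK) | exact (h02.symm' _ _ hK)
               | exact (h03.symm' _ _ hK))⟩
  left_inv φ := by
    ext x
    obtain ⟨p, rfl⟩ : ∃ p, finProdFinEquiv p = x := ⟨finProdFinEquiv.symm x, by simp⟩
    obtain ⟨i, a⟩ := p
    fin_cases i <;> simp [Equiv.symm_apply_apply]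
  right_inv q := by
    apply Subtype.ext
    refine Prod.ext ?_ (Prod.ext ?_ (Prod.ext ?_ ?_)) <;>
      · funext a
        simp [Equiv.symm_apply_apply]

def tb1 : List ℕ :=
  [8, 2, 2, 2, 2, 1, 2, 1, 2, 2, 2, 1, 2, 8, 2, 1, 2, 2, 2, 1, 2, 1, 2, 2, 2, 2, 8]
def tb2 : List ℕ :=
  [28, 10, 10, 10, 10, 1, 10, 1, 10, 10, 10, 1, 10, 28, 10, 1, 10, 10, 10, 1, 10, 1, 10, 10,
   10, 10, 28]
def tb3 : List ℕ :=
  [116, 38, 38, 38, 38, 1, 38, 1, 38, 38, 38, 1, 38, 116, 38, 1, 38, 38, 38, 1, 38, 1, 38, 38,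
   38, 38, 116]

def t1 (c : Col) : ℕ := tb1.getD ((c 0).val + 3 * (c 1).val + 9 * (c 2).val) 0
def t2 (c : Col) : ℕ := tb2.getD ((c 0).val + 3 * (c 1).val + 9 * (c 2).val) 0
def t3 (c : Col) : ℕ := tb3.getD ((c 0).val + 3 * (c 1).val + 9 * (c 2).val) 0

lemma ht1 : ∀ c : Col, (∑ c' : Col, if Rc c c' then 1 else 0) = t1 c := by decide
lemma ht2 : ∀ c : Col, (∑ c' : Col, (if Rc c c' then 1 else 0) * t1 c') = t2 c := by decide
lemma ht3 : ∀ c : Col, (∑ c' : Col, (if Rc c c' then 1 else 0) * t2 c') = t3 c := by decide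
lemma hfin : (∑ c : Col, t3 c) = 1038 := by decide
lemma hstar : (∑ c : Col, t1 c * (t1 c * t1 c)) = 1686 := by decide

lemma ite_and_mul (A B : Prop) [Decidable A] [Decidable B] :
    (if A ∧ B then (1:ℕ) else 0) = (if A then 1 else 0) * (if B then 1 else 0) := by
  by_cases hA : A <;> by_cases hB : B <;> simp [hA, hB]

lemma pathCount :
    Nat.card ((tensorG P4 (completeGraph (Fin 3))) →g completeGraph (Fin 3)) = 1038 := by
  rw [Nat.card_congr homP4K3Equiv, Nat.card_eq_fintype_card, Fintype.card_subtype,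
    Finset.card_filter]
  simp only [Fintype.sum_prod_type, ite_and_mul]
  dsimp +instances only
  simp only [← Finset.mul_sum]
  simp only [ht1]
  simp only [ht2]
  simp only [ht3]
  exact hfin

lemma starCount :
    Nat.card ((tensorG S4 (completeGraph (Fin 3))) →g completeGraph (Fin 3)) = 1686 := by
  rw [Nat.card_congr homS4K3Equiv, Nat.card_eq_fintype_card, Fintype.card_subtype,
    Finset.card_filter]
  simp only [Fintype.sum_prod_type, ite_and_mul]
  dsimp +instances only
  simp only [← Finset.mul_sum, ← Finset.sum_mul, ht1]
  exact hstar

/-- There is no class `𝓕` of finite simple graphs (non-empty, closed under isomorphism) such that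
two graphs are chromatically equivalent exactly when their left-homomorphism counts from every
member of `𝓕` agree. -/
theorem no_class_captures_chromatic_equivalence :
    ¬ ∃ 𝓕 : ∀ n : ℕ, Set (SimpleGraph (Fin n)),
      (∃ (n : ℕ) (G : SimpleGraph (Fin n)), G ∈ 𝓕 n) ∧
      (∀ (m n : ℕ) (G : SimpleGraph (Fin m)) (H : SimpleGraph (Fin n)),
        G ∈ 𝓕 m → Nonempty (G ≃g H) → H ∈ 𝓕 n) ∧
      (∀ (m n : ℕ) (G : SimpleGraph (Fin m)) (H : SimpleGraph (Fin n)),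
        ChromaticallyEquivalent G H ↔
          ∀ (k : ℕ) (F : SimpleGraph (Fin k)), F ∈ 𝓕 k →
            Nat.card (F →g G) = Nat.card (F →g H)) := by
  rintro ⟨𝓕, -, -, hiff⟩
  have h2 := (hiff 4 4 P4 S4).1 chromEquiv_P4_S4
  have h3 : ChromaticallyEquivalent (tensorG P4 (completeGraph (Fin 3)))
      (tensorG S4 (completeGraph (Fin 3))) := by
    apply (hiff (4*3) (4*3) _ _).2
    intro k F hF
    rw [card_hom_tensor, card_hom_tensor, h2 k F hF]
  have h5 := h3 3 (by norm_num)
  rw [pathCount, starCount] at h5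
  exact absurd h5 (by norm_num)
end
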